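/- Consider the one-sided Tron game on a path P_n: Alice picks a start vertex and makes two moves before Bob joins; thereafter they alternate. Under optimal play the ratio (Bob's score)/(Alice's score) is Theta(sqrt(n)): it is at least c1*sqrt(n) and at most c2*sqrt(n) for absolute constants c1, c2 > 0 and all sufficiently large n. -/

import Mathlib

/-- A state of the Tron game: positions of the two players, the set of
vertices visited so far by either player, and the two scores. -/
structure TronState (V : Type) where
  posA : V
  posB : V
  visited : Finset V
  scoreA : ℕ
  scoreB : ℕ

/-- A player at `p` is stuck if every vertex it could move to is visited. -/
def TronStuck {V : Type} (R : V → V → Prop) (p : V) (vis : Finset V) : Prop :=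
  ∀ w, R p w → w ∈ vis

open Classical in
/-- Bob (second player) can force predicate `P` of the two final scores
(Alice's, Bob's), playing on the (possibly directed) edge relation `R`;
`turn = true` means Alice moves next.  A stuck player passes; the game ends
when both players are stuck. -/
def tronForceB {V : Type} [DecidableEq V] (R : V → V → Prop) (P : ℕ → ℕ → Prop) :
    ℕ → Bool → TronState V → Prop
  | 0, _, s => P s.scoreA s.scoreB
  | f + 1, true, s =>
      if TronStuck R s.posA s.visited then
        if TronStuck R s.posB s.visited then P s.scoreA s.scoreB
        else tronForceB R P f false s
      else
        ∀ w, R s.posA w → w ∉ s.visited →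
          tronForceB R P f false ⟨w, s.posB, insert w s.visited, s.scoreA + 1, s.scoreB⟩
  | f + 1, false, s =>
      if TronStuck R s.posB s.visited then
        if TronStuck R s.posA s.visited then P s.scoreA s.scoreB
        else tronForceB R P f true s
      else
        ∃ w, R s.posB w ∧ w ∉ s.visited ∧
          tronForceB R P f true ⟨s.posA, w, insert w s.visited, s.scoreA, s.scoreB + 1⟩

open Classical in
/-- Alice (first player) can force predicate `P` of the final scores. -/
def tronForceA {V : Type} [DecidableEq V] (R : V → V → Prop) (P : ℕ → ℕ → Prop) :
    ℕ → Bool → TronState V → Prop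
  | 0, _, s => P s.scoreA s.scoreB
  | f + 1, true, s =>
      if TronStuck R s.posA s.visited then
        if TronStuck R s.posB s.visited then P s.scoreA s.scoreB
        else tronForceA R P f false s
      else
        ∃ w, R s.posA w ∧ w ∉ s.visited ∧
          tronForceA R P f false ⟨w, s.posB, insert w s.visited, s.scoreA + 1, s.scoreB⟩
  | f + 1, false, s =>
      if TronStuck R s.posB s.visited then
        if TronStuck R s.posA s.visited then P s.scoreA s.scoreB
        else tronForceA R P f true s
      else
        ∀ w, R s.posB w → w ∉ s.visited →
          tronForceA R P f true ⟨s.posA, w, insert w s.visited, s.scoreA, s.scoreB + 1⟩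

open Classical in
/-- Every complete play of the game satisfies `P` of the final scores. -/
def tronInevitable {V : Type} [DecidableEq V] (R : V → V → Prop) (P : ℕ → ℕ → Prop) :
    ℕ → Bool → TronState V → Prop
  | 0, _, s => P s.scoreA s.scoreB
  | f + 1, true, s =>
      if TronStuck R s.posA s.visited then
        if TronStuck R s.posB s.visited then P s.scoreA s.scoreB
        else tronInevitable R P f false s
      else
        ∀ w, R s.posA w → w ∉ s.visited →
          tronInevitable R P f false ⟨w, s.posB, insert w s.visited, s.scoreA + 1, s.scoreB⟩
  | f + 1, false, s =>
      if TronStuck R s.posB s.visited then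
        if TronStuck R s.posA s.visited then P s.scoreA s.scoreB
        else tronInevitable R P f true s
      else
        ∀ w, R s.posB w → w ∉ s.visited →
          tronInevitable R P f true ⟨s.posA, w, insert w s.visited, s.scoreA, s.scoreB + 1⟩

/-- The initial state once Alice has started at `v` and Bob at `w`:
both vertices are visited, both scores are `1`, and Alice moves first. -/
def tronInit {V : Type} [DecidableEq V] (v w : V) : TronState V :=
  ⟨v, w, {v, w}, 1, 1⟩

/-- Enough fuel for any Tron game on `V` to finish. -/
def tronFuel (V : Type) [Fintype V] : ℕ := 2 * Fintype.card V + 2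

/-- In the Tron game on `G` (Alice picks a start vertex, then Bob picks a
different one, then they alternate, Alice first), Bob can force `P`. -/
def bobCanForce {V : Type} [Fintype V] [DecidableEq V] (G : SimpleGraph V)
    (P : ℕ → ℕ → Prop) : Prop :=
  ∀ v : V, ∃ w, w ≠ v ∧ tronForceB G.Adj P (tronFuel V) true (tronInit v w)

/-- In the Tron game on `G`, Alice can force `P`. -/
def aliceCanForce {V : Type} [Fintype V] [DecidableEq V] (G : SimpleGraph V)
    (P : ℕ → ℕ → Prop) : Prop :=
  ∃ v : V, ∀ w, w ≠ v → tronForceA G.Adj P (tronFuel V) true (tronInit v w)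

/-- The path graph on `Fin n`. -/
def pathG (n : ℕ) : SimpleGraph (Fin n) :=
  SimpleGraph.fromRel (fun x y => x.val + 1 = y.val)

/-!
If Alice's head has room `x` in front of it, Bob either cuts her off there, scoring `x` against
her `3`, or starts behind her trail, scoring `n - x - 3` against her `x + 3`; cutting her off
when `x ≥ √n` makes the ratio at least `√n / 3`. Conversely Alice opens with her head at
`⌊√n⌋`, facing the end `0`: Bob starting in front of her is fenced into `⌊√n⌋` vertices, and Bob
starting behind her cannot stop her from collecting `⌊√n⌋ + 3`.

Once both have started, each of these outcomes holds for every play (`tronInevitable`), so it is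
forced by either player and follows from an invariant of single moves.
-/

namespace TronState

variable {V : Type} [DecidableEq V]

@[simps]
def moveA (s : TronState V) (w : V) : TronState V :=
  ⟨w, s.posB, insert w s.visited, s.scoreA + 1, s.scoreB⟩

@[simps]
def moveB (s : TronState V) (w : V) : TronState V :=
  ⟨s.posA, w, insert w s.visited, s.scoreA, s.scoreB + 1⟩

end TronState

section General

variable {V : Type} {R : V → V → Prop} {P : ℕ → ℕ → Prop}

theorem exists_move_of_not_tronStuck {p : V} {vis : Finset V} (h : ¬ TronStuck R p vis) :
    ∃ w, R p w ∧ w ∉ vis := by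
  simpa [TronStuck] using h

variable [DecidableEq V]

theorem tronForceB_of_tronInevitable :
    ∀ {f : ℕ} {t : Bool} {s : TronState V}, tronInevitable R P f t s → tronForceB R P f t s
  | 0, _, _, h => h
  | f + 1, true, s, h => by
    rw [tronInevitable] at h
    rw [tronForceB]
    split_ifs at h ⊢
    · exact h
    · exact tronForceB_of_tronInevitable h
    · exact fun w hw hwv => tronForceB_of_tronInevitable (h w hw hwv)
  | f + 1, false, s, h => by
    rw [tronInevitable] at h
    rw [tronForceB]
    split_ifs at h ⊢ with hB
    · exact h
    · exact tronForceB_of_tronInevitable h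
    · obtain ⟨w, hw, hwv⟩ := exists_move_of_not_tronStuck hB
      exact ⟨w, hw, hwv, tronForceB_of_tronInevitable (h w hw hwv)⟩

theorem tronForceA_of_tronInevitable :
    ∀ {f : ℕ} {t : Bool} {s : TronState V}, tronInevitable R P f t s → tronForceA R P f t s
  | 0, _, _, h => h
  | f + 1, true, s, h => by
    rw [tronInevitable] at h
    rw [tronForceA]
    split_ifs at h ⊢ with hA
    · exact h
    · exact tronForceA_of_tronInevitable h
    · obtain ⟨w, hw, hwv⟩ := exists_move_of_not_tronStuck hA
      exact ⟨w, hw, hwv, tronForceA_of_tronInevitable (h w hw hwv)⟩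
  | f + 1, false, s, h => by
    rw [tronInevitable] at h
    rw [tronForceA]
    split_ifs at h ⊢
    · exact h
    · exact tronForceA_of_tronInevitable h
    · exact fun w hw hwv => tronForceA_of_tronInevitable (h w hw hwv)

variable [Fintype V]

theorem card_sub_card_insert {vis : Finset V} {w : V} (hw : w ∉ vis) :
    Fintype.card V - (insert w vis).card + 1 = Fintype.card V - vis.card := by
  have := Finset.card_le_univ (insert w vis)
  rw [Finset.card_insert_of_notMem hw] at *
  omega

/-- Each round either adds a visited vertex or ends the game, since a player who has to pass
stays stuck; so `2` units of fuel per free vertex suffice. -/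
theorem tronInevitable_of_invariant (I : TronState V → Prop)
    (hA : ∀ s w, I s → R s.posA w → w ∉ s.visited → I (s.moveA w))
    (hB : ∀ s w, I s → R s.posB w → w ∉ s.visited → I (s.moveB w))
    (hend : ∀ s, I s → TronStuck R s.posA s.visited → TronStuck R s.posB s.visited →
      P s.scoreA s.scoreB) :
    ∀ f t s, I s → 2 * (Fintype.card V - s.visited.card) + 2 ≤ f → tronInevitable R P f t s := by
  intro f
  induction f using Nat.strong_induction_on with
  | _ f IH =>
  intro t s hI hf
  have hmove : ∀ f' < f, ∀ t' w s', w ∉ s.visited → s'.visited = insert w s.visited → I s' →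
      2 * (Fintype.card V - s.visited.card) ≤ f' → tronInevitable R P f' t' s' := by
    intro f' hf' t' w s' hwv hvis' hI' hfuel
    have := card_sub_card_insert hwv
    exact IH f' hf' t' s' hI' (by rw [hvis']; omega)
  obtain ⟨f, rfl⟩ : ∃ f', f = f' + 1 := ⟨f - 1, by omega⟩
  cases t
  · rw [tronInevitable]
    split_ifs with hsB hsA
    · exact hend s hI hsA hsB
    · obtain ⟨f, rfl⟩ : ∃ f', f = f' + 1 := ⟨f - 1, by omega⟩
      rw [tronInevitable, if_neg hsA]
      exact fun w hw hwv => hmove f (by omega) _ w _ hwv rfl (hA s w hI hw hwv) (by omega)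
    · exact fun w hw hwv => hmove f (by omega) _ w _ hwv rfl (hB s w hI hw hwv) (by omega)
  · rw [tronInevitable]
    split_ifs with hsA hsB
    · exact hend s hI hsA hsB
    · obtain ⟨f, rfl⟩ : ∃ f', f = f' + 1 := ⟨f - 1, by omega⟩
      rw [tronInevitable, if_neg hsB]
      exact fun w hw hwv => hmove f (by omega) _ w _ hwv rfl (hB s w hI hw hwv) (by omega)
    · exact fun w hw hwv => hmove f (by omega) _ w _ hwv rfl (hA s w hI hw hwv) (by omega)

end General

section Fenced

variable {V : Type} [DecidableEq V] [Fintype V] {R : V → V → Prop} {P : ℕ → ℕ → Prop}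

/-- Bob never leaves the fenced region `S`, and each of his moves visits a new vertex of it. -/
theorem tronInevitable_of_fenced (S : Finset V) (s : TronState V) (hB : s.posB ∈ S)
    (hfence : ∀ u ∈ S, ∀ w, R u w → w ∉ S → w ∈ s.visited)
    (hscore : s.scoreB ≤ (s.visited ∩ S).card)
    (hP : ∀ a b, s.scoreA ≤ a → b ≤ S.card → P a b) (f : ℕ) (t : Bool)
    (hf : 2 * (Fintype.card V - s.visited.card) + 2 ≤ f) :
    tronInevitable R P f t s := by
  refine tronInevitable_of_invariant
    (fun s' => s'.posB ∈ S ∧ s.visited ⊆ s'.visited ∧ s'.scoreB ≤ (s'.visited ∩ S).card ∧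
      s.scoreA ≤ s'.scoreA) ?_ ?_ ?_ f t s ⟨hB, subset_rfl, hscore, le_rfl⟩ hf
  · rintro s' w ⟨hB', hsub, hscore', hA'⟩ - -
    refine ⟨hB', hsub.trans (Finset.subset_insert _ _), ?_, hA'.trans (Nat.le_succ _)⟩
    exact hscore'.trans (Finset.card_le_card (Finset.inter_subset_inter_right
      (Finset.subset_insert _ _)))
  · rintro s' w ⟨hB', hsub, hscore', hA'⟩ hw hwv
    have hwS : w ∈ S := by
      by_contra hwS
      exact hwv (hsub (hfence _ hB' w hw hwS))
    refine ⟨hwS, hsub.trans (Finset.subset_insert _ _), ?_, hA'⟩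
    simp only [TronState.moveB_visited, TronState.moveB_scoreB, Finset.insert_inter_of_mem hwS]
    rw [Finset.card_insert_of_notMem (fun h => hwv (Finset.mem_of_mem_inter_left h))]
    omega
  · rintro s' ⟨-, -, hscore', hA'⟩ - -
    exact hP _ _ hA' (hscore'.trans (Finset.card_le_card Finset.inter_subset_right))

end Fenced

section Path

variable {n : ℕ}

theorem pathG_adj_iff {a b : Fin n} :
    (pathG n).Adj a b ↔ a.val + 1 = b.val ∨ b.val + 1 = a.val := by
  simp only [pathG, SimpleGraph.fromRel_adj, ne_eq, and_iff_right_iff_imp]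
  rintro h rfl
  omega

def pathG.reverse (n : ℕ) : pathG n ≃g pathG n where
  toEquiv := Fin.revPerm
  map_rel_iff' := by
    intro a b
    simp only [Fin.revPerm_apply, pathG_adj_iff, Fin.val_rev]
    omega

namespace PathCoord

/- An automorphism `φ` of the path serves as an orientation: `(φ i).val` is the coordinate of
`i` counted from the end `φ⁻¹ 0`. -/

variable (φ : pathG n ≃g pathG n)

theorem adj_iff {a b : Fin n} :
    (pathG n).Adj a b ↔ (φ a).val + 1 = (φ b).val ∨ (φ b).val + 1 = (φ a).val := by
  rw [← φ.map_adj_iff, pathG_adj_iff]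

theorem eq_iff {a b : Fin n} : a = b ↔ (φ a).val = (φ b).val := by
  rw [← Fin.ext_iff, φ.injective.eq_iff]

theorem mem_insert_iff {i w : Fin n} {vis : Finset (Fin n)} :
    i ∈ insert w vis ↔ (φ i).val = (φ w).val ∨ i ∈ vis := by
  rw [Finset.mem_insert, eq_iff φ]

theorem exists_eq {k : ℕ} (hk : k < n) : ∃ i, (φ i).val = k :=
  ⟨φ.symm ⟨k, hk⟩, by simp⟩

theorem eq_zero_of_tronStuck {p : Fin n} {vis : Finset (Fin n)}
    (hs : TronStuck (pathG n).Adj p vis) (hfree : ∀ i, (φ i).val + 1 = (φ p).val → i ∉ vis) :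
    (φ p).val = 0 := by
  by_contra h
  obtain ⟨i, hi⟩ := exists_eq φ (k := (φ p).val - 1) (by omega)
  exact hfree i (by omega) (hs i ((adj_iff φ).2 (by omega)))

theorem eq_last_of_tronStuck {p : Fin n} {vis : Finset (Fin n)}
    (hs : TronStuck (pathG n).Adj p vis) (hfree : ∀ i, (φ p).val + 1 = (φ i).val → i ∉ vis) :
    (φ p).val + 1 = n := by
  by_contra h
  obtain ⟨i, hi⟩ := exists_eq φ (k := (φ p).val + 1) (by have := (φ p).isLt; omega)
  exact hfree i (by omega) (hs i ((adj_iff φ).2 (by omega)))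

end PathCoord

open PathCoord

variable {P : ℕ → ℕ → Prop} (φ : pathG n ≃g pathG n)

/-- Alice is walled in between Bob's start and her own trail, so only Bob moves, towards the
end `0` of the orientation `φ`. -/
theorem tronInevitable_pathG_trapped {hi : ℕ} (s : TronState (Fin n))
    (hvis : ∀ i, i ∈ s.visited ↔ (φ s.posB).val ≤ (φ i).val ∧ (φ i).val ≤ hi)
    (hA : (φ s.posB).val < (φ s.posA).val ∧ (φ s.posA).val < hi)
    (hP : P s.scoreA (s.scoreB + (φ s.posB).val)) (f : ℕ) (t : Bool)
    (hf : 2 * (n - s.visited.card) + 2 ≤ f) :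
    tronInevitable (pathG n).Adj P f t s := by
  refine tronInevitable_of_invariant
    (fun s => (∀ i, i ∈ s.visited ↔ (φ s.posB).val ≤ (φ i).val ∧ (φ i).val ≤ hi) ∧
      ((φ s.posB).val < (φ s.posA).val ∧ (φ s.posA).val < hi) ∧
      P s.scoreA (s.scoreB + (φ s.posB).val)) ?_ ?_ ?_ f t s ⟨hvis, hA, hP⟩
    (by simpa using hf)
  · rintro s w ⟨hvis, hA, -⟩ hw hwv
    rw [adj_iff φ] at hw
    exact absurd ((hvis w).2 (by omega)) hwv
  · rintro s w ⟨hvis, hA, hP⟩ hw hwv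
    rw [adj_iff φ] at hw
    have hw' : (φ w).val + 1 = (φ s.posB).val := by
      by_contra hw'
      exact hwv ((hvis w).2 (by omega))
    refine ⟨fun i => ?_, by simp only [TronState.moveB_posA, TronState.moveB_posB]; omega, ?_⟩
    · rw [TronState.moveB_visited, mem_insert_iff φ, hvis, TronState.moveB_posB]
      omega
    · simpa only [TronState.moveB_scoreA, TronState.moveB_scoreB, TronState.moveB_posB,
        show s.scoreB + 1 + (φ w).val = s.scoreB + (φ s.posB).val by omega] using hP
  · rintro s ⟨hvis, -, hP⟩ - hsB
    have h0 := eq_zero_of_tronStuck φ hsB fun i hi => by rw [hvis]; omega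
    simpa [h0] using hP

theorem tronInevitable_pathG_diverge (s : TronState (Fin n))
    (hvis : ∀ i, i ∈ s.visited ↔ (φ s.posA).val ≤ (φ i).val ∧ (φ i).val ≤ (φ s.posB).val)
    (hlt : (φ s.posA).val < (φ s.posB).val)
    (hP : P (s.scoreA + (φ s.posA).val) (s.scoreB + (n - 1 - (φ s.posB).val))) (f : ℕ)
    (t : Bool) (hf : 2 * (n - s.visited.card) + 2 ≤ f) :
    tronInevitable (pathG n).Adj P f t s := by
  refine tronInevitable_of_invariant
    (fun s => (∀ i, i ∈ s.visited ↔ (φ s.posA).val ≤ (φ i).val ∧ (φ i).val ≤ (φ s.posB).val) ∧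
      (φ s.posA).val < (φ s.posB).val ∧
      P (s.scoreA + (φ s.posA).val) (s.scoreB + (n - 1 - (φ s.posB).val)))
    ?_ ?_ ?_ f t s ⟨hvis, hlt, hP⟩ (by simpa using hf)
  · rintro s w ⟨hvis, hlt, hP⟩ hw hwv
    rw [adj_iff φ] at hw
    have hw' : (φ w).val + 1 = (φ s.posA).val := by
      by_contra hw'
      exact hwv ((hvis w).2 (by omega))
    refine ⟨fun i => ?_, by simp only [TronState.moveA_posA, TronState.moveA_posB]; omega, ?_⟩
    · rw [TronState.moveA_visited, mem_insert_iff φ, hvis, TronState.moveA_posA,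
        TronState.moveA_posB]
      omega
    · simpa only [TronState.moveA_scoreA, TronState.moveA_scoreB, TronState.moveA_posA,
        TronState.moveA_posB, show s.scoreA + 1 + (φ w).val = s.scoreA + (φ s.posA).val by omega]
        using hP
  · rintro s w ⟨hvis, hlt, hP⟩ hw hwv
    rw [adj_iff φ] at hw
    have hw' : (φ s.posB).val + 1 = (φ w).val := by
      by_contra hw'
      exact hwv ((hvis w).2 (by omega))
    have hwn := (φ w).isLt
    refine ⟨fun i => ?_, by simp only [TronState.moveB_posA, TronState.moveB_posB]; omega, ?_⟩
    · rw [TronState.moveB_visited, mem_insert_iff φ, hvis, TronState.moveB_posA,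
        TronState.moveB_posB]
      omega
    · simpa only [TronState.moveB_scoreA, TronState.moveB_scoreB, TronState.moveB_posA,
        TronState.moveB_posB,
        show s.scoreB + 1 + (n - 1 - (φ w).val) = s.scoreB + (n - 1 - (φ s.posB).val) by omega]
        using hP
  · rintro s ⟨hvis, hlt, hP⟩ hsA hsB
    have hA0 := eq_zero_of_tronStuck φ hsA fun i hi => by rw [hvis]; omega
    have hBn := eq_last_of_tronStuck φ hsB fun i hi => by rw [hvis]; omega
    simpa [hA0, show n - 1 - (φ s.posB).val = 0 by omega] using hP

/-- Alice heads for the end `0` of the orientation `φ` through free vertices that Bob, who is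
beyond her trail, can never reach. -/
theorem tronInevitable_pathG_escape (s : TronState (Fin n))
    (hfree : ∀ i, (φ i).val < (φ s.posA).val → i ∉ s.visited) (hA : s.posA ∈ s.visited)
    (hbehind : ∀ i, (φ i).val = (φ s.posA).val + 1 → i ∈ s.visited)
    (hB : (φ s.posA).val + 1 < (φ s.posB).val) (hscoreB : s.scoreB ≤ s.visited.card)
    (hP : ∀ b, b ≤ n → P (s.scoreA + (φ s.posA).val) b) (f : ℕ)
    (t : Bool) (hf : 2 * (n - s.visited.card) + 2 ≤ f) :
    tronInevitable (pathG n).Adj P f t s := by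
  refine tronInevitable_of_invariant
    (fun s' => (∀ i, (φ i).val < (φ s'.posA).val → i ∉ s'.visited) ∧ s'.posA ∈ s'.visited ∧
      (∀ i, (φ i).val = (φ s'.posA).val + 1 → i ∈ s'.visited) ∧
      (φ s'.posA).val + 1 < (φ s'.posB).val ∧ s'.scoreB ≤ s'.visited.card ∧
      s'.scoreA + (φ s'.posA).val = s.scoreA + (φ s.posA).val)
    ?_ ?_ ?_ f t s ⟨hfree, hA, hbehind, hB, hscoreB, rfl⟩ (by simpa using hf)
  · rintro s' w ⟨hfree, hA, hbehind, hB, hscoreB, hscore⟩ hw hwv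
    rw [adj_iff φ] at hw
    have hw' : (φ w).val + 1 = (φ s'.posA).val := by
      by_contra hw'
      exact hwv (hbehind w (by omega))
    simp only [TronState.moveA_posA, TronState.moveA_posB, TronState.moveA_visited,
      TronState.moveA_scoreA, TronState.moveA_scoreB, Finset.card_insert_of_notMem hwv]
    refine ⟨fun i hi => ?_, Finset.mem_insert_self _ _, fun i hi => ?_, by omega, by omega,
      by omega⟩
    · rw [mem_insert_iff φ, not_or]
      exact ⟨by omega, hfree i (by omega)⟩
    · rw [(eq_iff φ).2 (by omega : (φ i).val = (φ s'.posA).val)]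
      exact Finset.mem_insert_of_mem hA
  · rintro s' w ⟨hfree, hA, hbehind, hB, hscoreB, hscore⟩ hw hwv
    rw [adj_iff φ] at hw
    have hw' : (φ s'.posA).val + 1 < (φ w).val := by
      by_contra hw'
      exact hwv (hbehind w (by omega))
    simp only [TronState.moveB_posA, TronState.moveB_posB, TronState.moveB_visited,
      TronState.moveB_scoreA, TronState.moveB_scoreB, Finset.card_insert_of_notMem hwv]
    refine ⟨fun i hi => ?_, Finset.mem_insert_of_mem hA,
      fun i hi => Finset.mem_insert_of_mem (hbehind i hi), hw', by omega, hscore⟩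
    rw [mem_insert_iff φ, not_or]
    exact ⟨by omega, hfree i hi⟩
  · rintro s' ⟨hfree, -, -, -, hscoreB, hscore⟩ hsA -
    have h0 := eq_zero_of_tronStuck φ hsA fun i hi => hfree i (by omega)
    have hcard : s'.visited.card ≤ n := by simpa using Finset.card_le_univ s'.visited
    rw [show s'.scoreA = s.scoreA + (φ s.posA).val by omega]
    exact hP _ (by omega)

/-- Bob's two replies to an opening of Alice whose head is at coordinate `c` and whose trail is
`c + 1, c + 2`: cut her off at `c - 1`, or take the other side at `c + 3`. -/
theorem exists_tronInevitable_bob_reply (cur : Fin n) (vis : Fin n → Finset (Fin n))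
    (hvis : ∀ w i, i ∈ vis w ↔ i = w ∨
      (φ cur).val ≤ (φ i).val ∧ (φ i).val ≤ (φ cur).val + 2)
    (hP : (1 ≤ (φ cur).val ∧ P 3 (φ cur).val) ∨
      ((φ cur).val + 3 < n ∧ P ((φ cur).val + 3) (n - (φ cur).val - 3))) :
    ∃ w, ¬((φ cur).val ≤ (φ w).val ∧ (φ w).val ≤ (φ cur).val + 2) ∧
      tronInevitable (pathG n).Adj P (2 * n + 2) true ⟨cur, w, vis w, 3, 1⟩ := by
  rcases hP with ⟨hc, hP⟩ | ⟨hc, hP⟩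
  · obtain ⟨w, hw⟩ := exists_eq φ (k := (φ cur).val - 1) (by omega)
    refine ⟨w, by omega, tronInevitable_pathG_trapped φ (hi := (φ cur).val + 2) _
      (fun i => ?_) (by dsimp only; omega) ?_ _ _ (by omega)⟩
    · rw [hvis, eq_iff φ]
      dsimp only
      omega
    · dsimp only
      rwa [hw, show 1 + ((φ cur).val - 1) = (φ cur).val by omega]
  · obtain ⟨w, hw⟩ := exists_eq φ (k := (φ cur).val + 3) hc
    refine ⟨w, by omega, tronInevitable_pathG_diverge φ _ (fun i => ?_) (by dsimp only; omega) ?_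
      _ _ (by omega)⟩
    · rw [hvis, eq_iff φ]
      dsimp only
      omega
    · dsimp only
      rwa [hw, add_comm 3, show 1 + (n - 1 - ((φ cur).val + 3)) = n - (φ cur).val - 3 by omega]

theorem tronInevitable_alice_opening (a w : Fin n) (vis : Finset (Fin n))
    (hvis : ∀ i, i ∈ vis ↔ i = w ∨ a.val ≤ i.val ∧ i.val ≤ a.val + 2)
    (hw : ¬(a.val ≤ w.val ∧ w.val ≤ a.val + 2)) (hleft : ∀ x y, 3 ≤ x → y ≤ a.val → P x y)
    (hright : ∀ y, y ≤ n → P (3 + a.val) y) :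
    tronInevitable (pathG n).Adj P (2 * n + 2) true ⟨a, w, vis, 3, 1⟩ := by
  have hwvis : w ∈ vis := (hvis w).2 (Or.inl rfl)
  by_cases hwa : w.val < a.val
  · have hS : ∀ i, i ∈ Finset.Iio a ↔ i.val < a.val := fun i => Finset.mem_Iio
    refine tronInevitable_of_fenced (Finset.Iio a) ⟨a, w, vis, 3, 1⟩ ((hS w).2 hwa)
      (fun u hu x hux hx => ?_)
      (Finset.card_pos.2 ⟨w, Finset.mem_inter.2 ⟨hwvis, (hS w).2 hwa⟩⟩)
      (fun x y hx hy => hleft x y hx (by simpa using hy)) _ _ (by simp)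
    rw [hS] at hu hx
    rw [pathG_adj_iff] at hux
    exact (hvis x).2 (Or.inr (by omega))
  · refine tronInevitable_pathG_escape SimpleGraph.Iso.refl ⟨a, w, vis, 3, 1⟩ (fun i hi => ?_)
      ((hvis a).2 (Or.inr (by omega))) (fun i hi => (hvis i).2 (Or.inr ?_)) ?_
      (Finset.card_pos.2 ⟨w, hwvis⟩) hright _ _ (by omega)
    · simp only [RelIso.refl_apply] at hi
      rw [hvis, Fin.ext_iff]
      omega
    · simp only [RelIso.refl_apply] at hi
      omega
    · simp only [RelIso.refl_apply]
      omega

theorem exists_pathG_orientation {j : ℕ} (h : j + 2 < n) (cur : Fin n)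
    (hcur : cur = ⟨j, (Nat.le_add_right j 2).trans_lt h⟩ ∨ cur = ⟨j + 2, h⟩) :
    ∃ φ : pathG n ≃g pathG n, ∀ i : Fin n,
      (φ cur).val ≤ (φ i).val ∧ (φ i).val ≤ (φ cur).val + 2 ↔ j ≤ i.val ∧ i.val ≤ j + 2 := by
  rcases hcur with rfl | rfl
  · exact ⟨SimpleGraph.Iso.refl, fun i => Iff.rfl⟩
  · refine ⟨pathG.reverse n, fun i => ?_⟩
    simp only [pathG.reverse, RelIso.coe_fn_mk, Fin.revPerm_apply, Fin.val_rev]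
    omega

end Path

theorem sqrt_le_ratio_of_bob_reply {n : ℕ} (hn : 25 ≤ n) (c : ℕ) :
    (1 ≤ c ∧ 1 / 3 * √(n : ℝ) ≤ ((c : ℕ) : ℝ) / ((3 : ℕ) : ℝ)) ∨
      (c + 3 < n ∧ 1 / 3 * √(n : ℝ) ≤ ((n - c - 3 : ℕ) : ℝ) / ((c + 3 : ℕ) : ℝ)) := by
  have hn' : (25 : ℝ) ≤ n := by exact_mod_cast hn
  have hsq : √(n : ℝ) * √(n : ℝ) = n := Real.mul_self_sqrt (Nat.cast_nonneg n)
  have h5 : 5 ≤ √(n : ℝ) := by nlinarith [Real.sqrt_nonneg (n : ℝ)]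
  by_cases hc : √(n : ℝ) ≤ c
  · refine Or.inl ⟨by exact_mod_cast (show (1 : ℝ) ≤ c by linarith), ?_⟩
    push_cast
    linarith
  · rw [not_le] at hc
    have hcn : c + 3 < n := by
      have : (c : ℝ) + 3 < n := by nlinarith
      exact_mod_cast this
    refine Or.inr ⟨hcn, ?_⟩
    rw [le_div_iff₀ (by positivity), Nat.cast_sub (by omega), Nat.cast_sub (by omega)]
    push_cast
    nlinarith

theorem ratio_le_sqrt_of_alice_opening {n : ℕ} :
    (∀ a b : ℕ, 3 ≤ a → b ≤ n.sqrt → (b : ℝ) / (a : ℝ) ≤ 1 * √(n : ℝ)) ∧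
      ∀ b : ℕ, b ≤ n → (b : ℝ) / ((3 + n.sqrt : ℕ) : ℝ) ≤ 1 * √(n : ℝ) := by
  have hlo : (n.sqrt : ℝ) ≤ √(n : ℝ) := Real.nat_sqrt_le_real_sqrt
  have hhi : √(n : ℝ) < n.sqrt + 1 := Real.real_sqrt_lt_nat_sqrt_succ
  have hsq : √(n : ℝ) * √(n : ℝ) = n := Real.mul_self_sqrt (Nat.cast_nonneg n)
  refine ⟨fun a b ha hb => ?_, fun b hb => ?_⟩
  · have ha' : (3 : ℝ) ≤ a := by exact_mod_cast ha
    have hb' : (b : ℝ) ≤ n.sqrt := by exact_mod_cast hb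
    rw [div_le_iff₀ (by linarith)]
    nlinarith [Real.sqrt_nonneg (n : ℝ), Nat.cast_nonneg (α := ℝ) b]
  · have hb' : (b : ℝ) ≤ n := by exact_mod_cast hb
    rw [div_le_iff₀ (by positivity)]
    push_cast
    nlinarith [Real.sqrt_nonneg (n : ℝ)]

/-- One-sided Tron on the path `P_n` (Alice starts and makes
two moves, occupying three consecutive vertices, before Bob picks his start
vertex): under optimal play the ratio Bob/Alice is `Θ(√n)`.  Concretely, there
are absolute constants `c₁, c₂ > 0` such that for all large `n`: whatever
three consecutive vertices Alice occupies (facing either direction), Bob has a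
start forcing ratio at least `c₁√n`; and Alice has an opening after which she
forces ratio at most `c₂√n` against every Bob start. -/
theorem tron_one_sided_path_sqrt :
    ∃ c₁ c₂ : ℝ, 0 < c₁ ∧ 0 < c₂ ∧ ∃ N : ℕ, ∀ n, N ≤ n →
      (∀ j : ℕ, ∀ h : j + 2 < n, ∀ cur : Fin n,
        (cur = ⟨j, by omega⟩ ∨ cur = ⟨j + 2, h⟩) →
        ∃ w : Fin n,
          w ∉ ({⟨j, by omega⟩, ⟨j + 1, by omega⟩, ⟨j + 2, h⟩} : Finset (Fin n)) ∧
          tronForceB (pathG n).Adj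
            (fun a b => c₁ * Real.sqrt n ≤ (b : ℝ) / (a : ℝ)) (2 * n + 2) true
            ⟨cur, w, {⟨j, by omega⟩, ⟨j + 1, by omega⟩, ⟨j + 2, h⟩, w}, 3, 1⟩) ∧
      (∃ j : ℕ, ∃ h : j + 2 < n, ∃ cur : Fin n,
        (cur = ⟨j, by omega⟩ ∨ cur = ⟨j + 2, h⟩) ∧
        ∀ w : Fin n,
          w ∉ ({⟨j, by omega⟩, ⟨j + 1, by omega⟩, ⟨j + 2, h⟩} : Finset (Fin n)) →
          tronForceA (pathG n).Adj
            (fun a b => (b : ℝ) / (a : ℝ) ≤ c₂ * Real.sqrt n) (2 * n + 2) true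
            ⟨cur, w, {⟨j, by omega⟩, ⟨j + 1, by omega⟩, ⟨j + 2, h⟩, w}, 3, 1⟩) := by
  refine ⟨1 / 3, 1, by norm_num, by norm_num, 25, fun n hn => ⟨fun j h cur hcur => ?_, ?_⟩⟩
  · obtain ⟨φ, hφ⟩ := exists_pathG_orientation h cur hcur
    have hvis : ∀ w i : Fin n,
        i ∈ ({⟨j, by omega⟩, ⟨j + 1, by omega⟩, ⟨j + 2, h⟩, w} : Finset (Fin n)) ↔
          i = w ∨ (φ cur).val ≤ (φ i).val ∧ (φ i).val ≤ (φ cur).val + 2 := by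
      intro w i
      rw [hφ]
      simp only [Finset.mem_insert, Finset.mem_singleton, Fin.ext_iff]
      omega
    obtain ⟨w, hw, hplay⟩ := exists_tronInevitable_bob_reply φ cur _ hvis
      (P := fun a b => 1 / 3 * √(n : ℝ) ≤ (b : ℝ) / (a : ℝ)) (sqrt_le_ratio_of_bob_reply hn _)
    rw [hφ] at hw
    exact ⟨w, by simp only [Finset.mem_insert, Finset.mem_singleton, Fin.ext_iff]; omega, tronForceB_of_tronInevitable hplay⟩
  · have hm : n.sqrt + 2 < n := by
      have h5 : 5 ≤ n.sqrt := Nat.le_sqrt.2 (by omega)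
      nlinarith [Nat.sqrt_le n]
    refine ⟨n.sqrt, hm, _, Or.inl rfl, fun w hw => tronForceA_of_tronInevitable ?_⟩
    exact tronInevitable_alice_opening _ w _ (fun i => by simp only [Finset.mem_insert, Finset.mem_singleton, Fin.ext_iff]; omega)
      (by simp only [Finset.mem_insert, Finset.mem_singleton, Fin.ext_iff] at hw ⊢; omega) ratio_le_sqrt_of_alice_opening.1
      ratio_le_sqrt_of_alice_opening.2
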